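/- arXiv:1709.03679 — 2 statements merged into one kernel-verified Lean document; each statement's English description precedes it below -/
import Mathlib

section
/- For every t ∈ ℝ^{m+1}, ‖b − C_m C_mᵀ (W_{m+1} t)‖ = ‖ ‖b‖ e_1 − H_m H_mᵀ t ‖, where e_1 is the first canonical basis vector of ℝ^{m+1}. -/
/-! Since `W₁ᵀ W₁ = I`, multiplication by `W₁` is an isometry; moreover `b = W₁ (‖b‖ e₁)` and
`C Cᵀ W₁ = W₁ H Hᵀ W₁ᵀ W₁ = W₁ H Hᵀ`, so `b − C Cᵀ W₁ t = W₁ (‖b‖ e₁ − H Hᵀ t)`. -/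

open Matrix

/-- The Euclidean (ℓ²) norm of a vector in `Fin n → ℝ`. -/
noncomputable def euclNorm {n : ℕ} (v : Fin n → ℝ) : ℝ :=
  ‖(EuclideanSpace.equiv (Fin n) ℝ).symm v‖

lemma euclNorm_eq_sqrt_dotProduct {n : ℕ} (v : Fin n → ℝ) : euclNorm v = √(v ⬝ᵥ v) := by
  rw [euclNorm, EuclideanSpace.norm_eq]
  simp [dotProduct, sq]

lemma euclNorm_mulVec_of_transpose_mul_self {N n : ℕ} {W : Matrix (Fin N) (Fin n) ℝ}
    (hW : Wᵀ * W = 1) (x : Fin n → ℝ) : euclNorm (W *ᵥ x) = euclNorm x := by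
  rw [euclNorm_eq_sqrt_dotProduct, euclNorm_eq_sqrt_dotProduct, dotProduct_mulVec,
    ← mulVec_transpose, mulVec_mulVec, hW, one_mulVec]

lemma mulVec_smul_single_of_col_eq_div {M n : Type*} [Fintype n] [DecidableEq n]
    {W : Matrix M n ℝ} {b : M → ℝ} {c : ℝ} (hc : c ≠ 0) {j : n} (hcol : ∀ i, W i j = b i / c) :
    W *ᵥ (c • Pi.single j 1) = b := by
  ext i
  rw [mulVec_smul, mulVec_single_one, Pi.smul_apply, col_apply, hcol, smul_eq_mul,
    mul_div_cancel₀ _ hc]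

lemma mul_mul_transpose_mul_of_transpose_mul_self {M n k : Type*} [Fintype n] [Fintype M]
    [Fintype k] [DecidableEq n] {W : Matrix M n ℝ} (hW : Wᵀ * W = 1) (H : Matrix n k ℝ) :
    (W * H) * (W * H)ᵀ * W = W * (H * Hᵀ) := by
  rw [transpose_mul, Matrix.mul_assoc, Matrix.mul_assoc, Matrix.mul_assoc, hW, Matrix.mul_one,
    ← Matrix.mul_assoc]

theorem stmt_15_general {N m : ℕ} (b : Fin N → ℝ) (hb : b ≠ 0)
    (W1 : Matrix (Fin N) (Fin (m + 1)) ℝ) (H : Matrix (Fin (m + 1)) (Fin m) ℝ)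
    (hW1 : W1ᵀ * W1 = 1)
    (hcol : ∀ i, W1 i 0 = b i / euclNorm b)
    (C : Matrix (Fin N) (Fin m) ℝ) (hC : C = W1 * H) :
    ∀ t : Fin (m + 1) → ℝ,
      euclNorm (b - (C * Cᵀ).mulVec (W1.mulVec t)) =
        euclNorm (euclNorm b • (Pi.single 0 1 : Fin (m + 1) → ℝ) - (H * Hᵀ).mulVec t) := by
  intro t
  have hnb : euclNorm b ≠ 0 := by simpa [euclNorm] using hb
  have hb_eq : W1 *ᵥ (euclNorm b • Pi.single 0 1) = b := mulVec_smul_single_of_col_eq_div hnb hcol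
  have hCCW : C * Cᵀ * W1 = W1 * (H * Hᵀ) := hC ▸ mul_mul_transpose_mul_of_transpose_mul_self hW1 H
  rw [← euclNorm_mulVec_of_transpose_mul_self hW1, mulVec_sub, hb_eq, mulVec_mulVec,
    mulVec_mulVec, hCCW]

/-- For every `t ∈ ℝ^{m+1}`,
`‖b − Cₘ Cₘᵀ (Wₘ₊₁ t)‖ = ‖ ‖b‖ e₁ − Hₘ Hₘᵀ t ‖`. -/
theorem stmt_15 {N m : ℕ} (A : Matrix (Fin N) (Fin N) ℝ) (b : Fin N → ℝ) (hb : b ≠ 0)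
    (W1 : Matrix (Fin N) (Fin (m + 1)) ℝ) (H : Matrix (Fin (m + 1)) (Fin m) ℝ)
    (Wm : Matrix (Fin N) (Fin m) ℝ)
    (hW1 : W1ᵀ * W1 = 1)
    (hcol : ∀ i, W1 i 0 = b i / euclNorm b)
    (hWm : Wm = W1.submatrix id Fin.castSucc)
    (hArn : A * Wm = W1 * H)
    (C : Matrix (Fin N) (Fin m) ℝ) (hC : C = W1 * H) :
    ∀ t : Fin (m + 1) → ℝ,
      euclNorm (b - (C * Cᵀ).mulVec (W1.mulVec t)) =
        euclNorm (euclNorm b • (Pi.single 0 1 : Fin (m + 1) → ℝ) - (H * Hᵀ).mulVec t) :=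
  stmt_15_general b hb W1 H hW1 hcol C hC
end

section
/- For every k ≥ 1, the Krylov subspace K_k(C_m C_mᵀ, b) equals the image under W_{m+1} of the Krylov subspace K_k(H_m H_mᵀ, ‖b‖ e_1); that is, K_k(C_m C_mᵀ, b) = { W_{m+1} u : u ∈ K_k(H_m H_mᵀ, ‖b‖ e_1) }, where e_1 is the first canonical basis vector of ℝ^{m+1}. -/
open Matrix

/-- The Krylov subspace `K_k(C, d) = span {d, C d, …, C^{k-1} d}`. -/
def Krylov {n : ℕ} (C : Matrix (Fin n) (Fin n) ℝ) (d : Fin n → ℝ) (k : ℕ) :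
    Submodule ℝ (Fin n → ℝ) :=
  Submodule.span ℝ {v : Fin n → ℝ | ∃ j < k, v = (C ^ j).mulVec d}

/-! `Cₘ Cₘᵀ Wₘ₊₁ = Wₘ₊₁ Hₘ Hₘᵀ` because `Wₘ₊₁ᵀ Wₘ₊₁ = I`, and `Wₘ₊₁ (‖b‖ e₁) = b` because the
first column of `Wₘ₊₁` is `b / ‖b‖`. Hence `Wₘ₊₁` intertwines the two operators and carries the
one starting vector to the other, so it maps each Krylov power `(Hₘ Hₘᵀ)ʲ ‖b‖ e₁` to
`(Cₘ Cₘᵀ)ʲ b`, and the spans correspond. -/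

lemma euclNorm_ne_zero {n : ℕ} {v : Fin n → ℝ} (hv : v ≠ 0) : euclNorm v ≠ 0 := by
  simpa [euclNorm] using hv

lemma pow_mul_eq_mul_pow_of_mul_eq {n p : ℕ} {M : Matrix (Fin n) (Fin n) ℝ}
    {M' : Matrix (Fin p) (Fin p) ℝ} {W : Matrix (Fin n) (Fin p) ℝ} (h : M * W = W * M') (j : ℕ) :
    M ^ j * W = W * M' ^ j := by
  induction j with
  | zero => simp
  | succ j ih => rw [pow_succ, Matrix.mul_assoc, h, ← Matrix.mul_assoc, ih, Matrix.mul_assoc,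
      ← pow_succ]

lemma Krylov_eq_map_of_mul_eq {n p : ℕ} {M : Matrix (Fin n) (Fin n) ℝ}
    {M' : Matrix (Fin p) (Fin p) ℝ} {W : Matrix (Fin n) (Fin p) ℝ} {d : Fin n → ℝ}
    {d' : Fin p → ℝ} (h : M * W = W * M') (hd : W *ᵥ d' = d) (k : ℕ) :
    Krylov M d k = (Krylov M' d' k).map W.mulVecLin := by
  have hpow (j : ℕ) : (M ^ j) *ᵥ d = W *ᵥ ((M' ^ j) *ᵥ d') := by
    rw [← hd, mulVec_mulVec, pow_mul_eq_mul_pow_of_mul_eq h, ← mulVec_mulVec]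
  rw [Krylov, Krylov, Submodule.map_span]
  congr 1
  ext v
  simp only [Set.mem_ofPred_eq, Set.mem_image, mulVecLin_apply]
  constructor
  · rintro ⟨j, hj, rfl⟩
    exact ⟨_, ⟨j, hj, rfl⟩, (hpow j).symm⟩
  · rintro ⟨u, ⟨j, hj, rfl⟩, rfl⟩
    exact ⟨j, hj, (hpow j).symm⟩

lemma mul_mul_transpose_mul_of_transpose_mul_self_s16 {n p q : ℕ} {W : Matrix (Fin n) (Fin p) ℝ}
    (hW : Wᵀ * W = 1) (H : Matrix (Fin p) (Fin q) ℝ) :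
    W * H * (W * H)ᵀ * W = W * (H * Hᵀ) := by
  simp only [transpose_mul, Matrix.mul_assoc, hW, Matrix.mul_one]

lemma mulVec_smul_single_zero {n p : ℕ} (W : Matrix (Fin n) (Fin (p + 1)) ℝ) (c : ℝ) :
    W *ᵥ (c • Pi.single 0 1) = c • fun i => W i 0 := by
  rw [mulVec_smul, mulVec_single_one]
  rfl

theorem stmt_16_general {N m : ℕ} (b : Fin N → ℝ) (hb : b ≠ 0)
    (W1 : Matrix (Fin N) (Fin (m + 1)) ℝ) (H : Matrix (Fin (m + 1)) (Fin m) ℝ)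
    (hW1 : W1ᵀ * W1 = 1)
    (hcol : ∀ i, W1 i 0 = b i / euclNorm b)
    (C : Matrix (Fin N) (Fin m) ℝ) (hC : C = W1 * H)
    (k : ℕ) :
    Krylov (C * Cᵀ) b k =
      Submodule.map (Matrix.mulVecLin W1)
        (Krylov (H * Hᵀ) (euclNorm b • (Pi.single 0 1 : Fin (m + 1) → ℝ)) k) := by
  have hstart : W1 *ᵥ (euclNorm b • Pi.single 0 1) = b := by
    ext i
    rw [mulVec_smul_single_zero, Pi.smul_apply, hcol, smul_eq_mul,
      mul_div_cancel₀ _ (euclNorm_ne_zero hb)]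
  subst hC
  exact Krylov_eq_map_of_mul_eq (mul_mul_transpose_mul_of_transpose_mul_self_s16 hW1 H) hstart k

/-- For every `k ≥ 1`, `K_k(Cₘ Cₘᵀ, b)` equals the image under `Wₘ₊₁`
of `K_k(Hₘ Hₘᵀ, ‖b‖ e₁)`. -/
theorem stmt_16 {N m : ℕ} (A : Matrix (Fin N) (Fin N) ℝ) (b : Fin N → ℝ) (hb : b ≠ 0)
    (W1 : Matrix (Fin N) (Fin (m + 1)) ℝ) (H : Matrix (Fin (m + 1)) (Fin m) ℝ)
    (Wm : Matrix (Fin N) (Fin m) ℝ)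
    (hW1 : W1ᵀ * W1 = 1)
    (hcol : ∀ i, W1 i 0 = b i / euclNorm b)
    (hWm : Wm = W1.submatrix id Fin.castSucc)
    (hArn : A * Wm = W1 * H)
    (C : Matrix (Fin N) (Fin m) ℝ) (hC : C = W1 * H)
    (k : ℕ) (hk : 1 ≤ k) :
    Krylov (C * Cᵀ) b k =
      Submodule.map (Matrix.mulVecLin W1)
        (Krylov (H * Hᵀ) (euclNorm b • (Pi.single 0 1 : Fin (m + 1) → ℝ)) k) :=
  stmt_16_general b hb W1 H hW1 hcol C hC k
end
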